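/- For d ≥ 2, the maximal minimal number of polynomials over all d-polyhedra satisfies m̄_P(d) ≤ m_P(d) + 1, where m_P(d) is the corresponding maximum over d-polytopes. -/

import Mathlib

/-!
Translate an interior point of the polyhedron `P` to the origin and rescale its inequalities to
`αₖ z ≤ 1`. Projecting away the lineality space and boxing it in with `-1 ≤ gⱼ z ≤ 1` exhibits `P`
as an affine preimage of `K = {z | ∀ k, αₖ z ≤ 1}` with `⋂ₖ ker αₖ = 0`. For a small multiple `c`
of `-∑ₖ αₖ` one has `1 + c z ≥ 1/2` on `K`, and the projective map `z ↦ z / (1 + c z)` sends `K`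
onto a full-dimensional polytope `Q`. Homogenising the polynomials describing `Q` with respect to
`1 + c z` describes `K`, at the cost of the single extra inequality `1 + c z ≥ 1/2`.
-/

/-- The minimal number of polynomials in a `P`-representation. -/
noncomputable def mP (d : ℕ) (P : Set (Fin d → ℝ)) : ℕ :=
  sInf {l : ℕ | ∃ p : Fin l → MvPolynomial (Fin d) ℝ,
    P = {x : Fin d → ℝ | ∀ j, 0 ≤ MvPolynomial.eval x (p j)}}

/-- `P` is a polyhedron: an intersection of finitely many closed halfspaces. -/
def IsPolyhedron {d : ℕ} (P : Set (Fin d → ℝ)) : Prop :=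
  ∃ (m : ℕ) (a : Fin m → Fin d → ℝ) (b : Fin m → ℝ),
    P = {x | ∀ i, ∑ j, a i j * x j ≤ b i}

/-- `m_P(d)`: maximum of `m_P(P)` over all full-dimensional polytopes `P ⊂ ℝ^d`. -/
noncomputable def mPmaxPolytope (d : ℕ) : ℕ :=
  sSup {n : ℕ | ∃ P : Set (Fin d → ℝ),
    IsPolyhedron P ∧ IsCompact P ∧ (interior P).Nonempty ∧ mP d P = n}

/-- `m̄_P(d)`: maximum of `m_P(P)` over all full-dimensional polyhedra `P ⊂ ℝ^d`. -/
noncomputable def mPmaxPolyhedron (d : ℕ) : ℕ :=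
  sSup {n : ℕ | ∃ P : Set (Fin d → ℝ),
    IsPolyhedron P ∧ (interior P).Nonempty ∧ mP d P = n}

open MvPolynomial

namespace MvPolynomial

variable {σ K : Type*} [Fintype σ] [Field K]

theorem IsHomogeneous.eval_smul {φ : MvPolynomial σ K} {n : ℕ} (hφ : φ.IsHomogeneous n)
    (t : K) (z : σ → K) : eval (t • z) φ = t ^ n * eval z φ := by
  simp only [eval_eq', Finset.mul_sum]
  refine Finset.sum_congr rfl fun d hd => ?_
  have hdeg : ∑ i, d i = n := by
    rw [← hφ (mem_support_iff.mp hd), Finsupp.weight_apply, Finsupp.sum_fintype _ _ (by simp)]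
    simp
  simp only [Pi.smul_apply, smul_eq_mul, mul_pow, Finset.prod_mul_distrib,
    Finset.prod_pow_eq_pow_sum, hdeg]
  ring

theorem exists_eval_eq_pow_totalDegree_mul_eval_inv_smul (q w : MvPolynomial σ K) :
    ∃ h : MvPolynomial σ K, ∀ z, eval z w ≠ 0 →
      eval z h = eval z w ^ q.totalDegree * eval ((eval z w)⁻¹ • z) q := by
  set D := q.totalDegree
  refine ⟨∑ i ∈ Finset.range (D + 1), homogeneousComponent i q * w ^ (D - i), fun z hw => ?_⟩
  conv_rhs => rw [← sum_homogeneousComponent q]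
  simp only [map_sum, map_mul, map_pow, Finset.mul_sum,
    (homogeneousComponent_isHomogeneous _ q).eval_smul]
  refine Finset.sum_congr rfl fun i hi => ?_
  rw [pow_sub₀ _ hw (Nat.lt_succ_iff.mp (Finset.mem_range.mp hi)), inv_pow]
  ring

end MvPolynomial

section PolyRep

variable {σ τ : Type*}

theorem LinearMap.apply_eq_sum_single_mul [Fintype σ] [DecidableEq σ] {R : Type*} [CommSemiring R]
    (ℓ : (σ → R) →ₗ[R] R) (x : σ → R) : ℓ x = ∑ j, ℓ (Pi.single j 1) * x j := by
  calc ℓ x = ℓ (∑ j, x j • Pi.single j 1) := by rw [← pi_eq_sum_univ']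
    _ = _ := by simp [mul_comm]

theorem exists_eval_eq_linearMap [Fintype σ] {R : Type*} [CommSemiring R] (ℓ : (σ → R) →ₗ[R] R) :
    ∃ p : MvPolynomial σ R, ∀ x, eval x p = ℓ x := by
  classical
  exact ⟨∑ j, C (ℓ (Pi.single j 1)) * X j, fun x => by
    rw [ℓ.apply_eq_sum_single_mul x]
    simp [mul_comm]⟩

theorem AffineMap.exists_eval_eq [Fintype σ] {R : Type*} [CommRing R]
    (f : (σ → R) →ᵃ[R] (τ → R)) : ∃ G : τ → MvPolynomial σ R, ∀ x k, eval x (G k) = f x k := by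
  choose p hp using fun k => exists_eval_eq_linearMap (LinearMap.proj k ∘ₗ f.linear)
  refine ⟨fun k => p k + C (f 0 k), fun x k => ?_⟩
  have hf : f x = f.linear x + f 0 := by
    rw [← sub_eq_iff_eq_add]
    simpa using (f.linearMap_vsub x 0).symm
  simp [hp, hf]

def HasPolyRep (l : ℕ) (P : Set (σ → ℝ)) : Prop :=
  ∃ p : Fin l → MvPolynomial σ ℝ, P = {x | ∀ j, 0 ≤ eval x (p j)}

theorem HasPolyRep.mP_le {d l : ℕ} {P : Set (Fin d → ℝ)} (h : HasPolyRep l P) : mP d P ≤ l :=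
  Nat.sInf_le h

theorem HasPolyRep.hasPolyRep_mP {d l : ℕ} {P : Set (Fin d → ℝ)} (h : HasPolyRep l P) :
    HasPolyRep (mP d P) P :=
  Nat.sInf_mem (s := {l | HasPolyRep l P}) ⟨l, h⟩

theorem hasPolyRep_setOf_forall_le [Fintype σ] {ι : Type*} [Fintype ι]
    (ℓ : ι → (σ → ℝ) →ₗ[ℝ] ℝ) (b : ι → ℝ) :
    HasPolyRep (Fintype.card ι) {x | ∀ k, ℓ k x ≤ b k} := by
  choose p hp using fun k => exists_eval_eq_linearMap (ℓ k)
  let e := Fintype.equivFin ι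
  refine ⟨fun j => C (b (e.symm j)) - p (e.symm j), Set.ext fun x => ?_⟩
  simp only [Set.mem_ofPred_eq, eval_sub, eval_C, hp, sub_nonneg]
  exact e.symm.forall_congr_right.symm

theorem HasPolyRep.preimage {l : ℕ} {S : Set (τ → ℝ)} (hS : HasPolyRep l S)
    {f : (σ → ℝ) → τ → ℝ} {G : τ → MvPolynomial σ ℝ} (hG : ∀ x k, eval x (G k) = f x k) :
    HasPolyRep l (f ⁻¹' S) := by
  obtain ⟨p, rfl⟩ := hS
  refine ⟨fun j => bind₁ G (p j), Set.ext fun x => ?_⟩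
  have hbind : ∀ j, eval x (bind₁ G (p j)) = eval (f x) (p j) := fun j => by
    rw [← funext (hG x)]
    exact eval₂Hom_bind₁ (RingHom.id ℝ) x G (p j)
  simp only [Set.mem_preimage, Set.mem_ofPred_eq, hbind]

theorem HasPolyRep.projective [Fintype σ] {l : ℕ} {Q : Set (σ → ℝ)} (hQ : HasPolyRep l Q)
    (w : MvPolynomial σ ℝ) {ε : ℝ} (hε : 0 < ε) :
    HasPolyRep (l + 1) {z | ε ≤ eval z w ∧ (eval z w)⁻¹ • z ∈ Q} := by
  obtain ⟨q, rfl⟩ := hQ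
  choose h hh using fun j => exists_eval_eq_pow_totalDegree_mul_eval_inv_smul (q j) w
  refine ⟨Fin.cons (w - C ε) h, Set.ext fun z => ?_⟩
  simp only [Set.mem_ofPred_eq, Fin.forall_fin_succ, Fin.cons_zero, Fin.cons_succ, eval_sub,
    eval_C, sub_nonneg]
  refine and_congr_right fun hw => forall_congr' fun j => ?_
  have hpos : 0 < eval z w := hε.trans_le hw
  rw [hh j z hpos.ne', mul_nonneg_iff_of_pos_left (pow_pos hpos _)]

end PolyRep

section Geometry

variable {E : Type*} [NormedAddCommGroup E] [NormedSpace ℝ E] [FiniteDimensional ℝ E]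
  {ι : Type*}

theorem LinearMap.eq_zero_of_isLocalMax {ℓ : E →ₗ[ℝ] ℝ} {x₀ : E} (h : IsLocalMax ℓ x₀) : ℓ = 0 := by
  have := h.hasFDerivAt_eq_zero (LinearMap.toContinuousLinearMap ℓ).hasFDerivAt
  ext x
  simpa using congr($this x)

theorem exists_le_iff_le_one {V : Type*} [AddCommGroup V] [Module ℝ V] {ℓ : V →ₗ[ℝ] ℝ} {b : ℝ}
    {x₀ : V} (hle : ℓ x₀ ≤ b) (heq : ℓ x₀ = b → ℓ = 0) :
    ∃ ℓ' : V →ₗ[ℝ] ℝ, ∀ x, ℓ x ≤ b ↔ ℓ' (x - x₀) ≤ 1 := by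
  rcases hle.lt_or_eq with hlt | heq'
  · refine ⟨(b - ℓ x₀)⁻¹ • ℓ, fun x => ?_⟩
    rw [LinearMap.smul_apply, smul_eq_mul, inv_mul_le_iff₀ (sub_pos.mpr hlt), map_sub]
    constructor <;> intro h <;> linarith
  · refine ⟨0, fun x => ?_⟩
    simp [heq heq', ← heq']

theorem exists_forall_le_iff_le_one (ℓ : ι → E →ₗ[ℝ] ℝ) (b : ι → ℝ) {x₀ : E}
    (hx₀ : x₀ ∈ interior {x | ∀ i, ℓ i x ≤ b i}) :
    ∃ ℓ' : ι → E →ₗ[ℝ] ℝ, ∀ x, (∀ i, ℓ i x ≤ b i) ↔ ∀ i, ℓ' i (x - x₀) ≤ 1 := by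
  have hle : ∀ i, ℓ i x₀ ≤ b i := interior_subset hx₀
  have heq : ∀ i, ℓ i x₀ = b i → ℓ i = 0 := fun i hi =>
    LinearMap.eq_zero_of_isLocalMax <| Filter.mem_of_superset (mem_interior_iff_mem_nhds.mp hx₀)
      fun x hx => hi ▸ hx i
  choose ℓ' hℓ' using fun i => exists_le_iff_le_one (hle i) (heq i)
  exact ⟨ℓ', fun x => forall_congr' fun i => hℓ' i x⟩

theorem exists_projection_kernel_eq_bot {K V : Type*} [Field K] [AddCommGroup V] [Module K V]
    [FiniteDimensional K V] (ℓ : ι → V →ₗ[K] K) :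
    ∃ (π : V →ₗ[K] V) (g : Fin (Module.finrank K V) → V →ₗ[K] K),
      (∀ i, ℓ i ∘ₗ π = ℓ i) ∧ (∀ k, g k ∘ₗ π = 0) ∧
      ∀ u, (∀ i, ℓ i u = 0) → (∀ k, g k u = 0) → u = 0 := by
  set L := ⨅ i, LinearMap.ker (ℓ i)
  obtain ⟨W, hLW⟩ := L.exists_isCompl
  set π := W.projection L hLW.symm
  set ρ := L.projection W hLW
  set b := Module.finBasis K V
  have hρ : ∀ x, π x + ρ x = x := Submodule.projection_add_projection_eq_self hLW.symm
  refine ⟨π, fun k => b.coord k ∘ₗ ρ, fun i => ?_, fun k => ?_, fun u hℓu hgu => ?_⟩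
  · ext x
    have hρx : ℓ i (ρ x) = 0 := (Submodule.mem_iInf _).mp (Submodule.projection_apply_mem hLW x) i
    conv_rhs => rw [← hρ x]
    simp [hρx]
  · ext x
    have hρπx : ρ (π x) = 0 :=
      (Submodule.projection_apply_eq_zero_iff hLW).mpr (Submodule.projection_apply_mem _ x)
    simp [hρπx]
  · have huL : u ∈ L := Submodule.mem_iInf _ |>.mpr fun i => hℓu i
    have hπu : π u = 0 := (Submodule.projection_apply_eq_zero_iff _).mpr huL
    have hρu : ρ u = 0 := b.ext_elem fun k => by simpa using hgu k
    rw [← hρ u, hπu, hρu, add_zero]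

theorem isCompact_setOf_forall_le [Fintype ι] {β : ι → E →ₗ[ℝ] ℝ} (b : ι → ℝ)
    (hβ : ∀ u, (∀ o, β o u ≤ 0) → u = 0) : IsCompact {y | ∀ o, β o y ≤ b o} := by
  have hcont : ∀ o, Continuous (β o) := fun o => (β o).continuous_of_finiteDimensional
  set G : E → ℝ := fun u => ∑ o, max (β o u) 0
  have hG_smul : ∀ {r : ℝ}, 0 ≤ r → ∀ u, G (r • u) = r * G u := fun hr u => by
    simp only [G, map_smul, smul_eq_mul, Finset.mul_sum, mul_max_of_nonneg _ _ hr, mul_zero]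
  have hG_pos : ∀ u ∈ Metric.sphere (0 : E) 1, 0 < G u := by
    intro u hu
    by_contra! hG
    have hzero := (Finset.sum_eq_zero_iff_of_nonneg fun o _ => le_max_right (β o u) 0).mp
      (hG.antisymm (Finset.sum_nonneg fun o _ => le_max_right _ _))
    have : u = 0 := hβ u fun o => max_eq_right_iff.mp (hzero o (Finset.mem_univ o))
    simp [this] at hu
  obtain ⟨δ, hδ, hδG⟩ := (isCompact_sphere (0 : E) 1).exists_forall_le'
    (continuous_finsetSum _ fun o _ => (hcont o).max continuous_const).continuousOn hG_pos
  have hG_ge : ∀ y, δ * ‖y‖ ≤ G y := by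
    intro y
    rcases eq_or_ne y 0 with rfl | hy
    · simp [G]
    have hnorm : 0 < ‖y‖ := norm_pos_iff.mpr hy
    calc δ * ‖y‖ ≤ G (‖y‖⁻¹ • y) * ‖y‖ :=
          mul_le_mul_of_nonneg_right (hδG _ (by simp [norm_smul, hnorm.ne'])) hnorm.le
      _ = G y := by rw [mul_comm, ← hG_smul hnorm.le, smul_inv_smul₀ hnorm.ne']
  refine Metric.isCompact_of_isClosed_isBounded ?_ ?_
  · simpa only [Set.ofPred_forall] using
      isClosed_iInter fun o => isClosed_le (hcont o) continuous_const
  · refine isBounded_iff_forall_norm_le.mpr ⟨δ⁻¹ * ∑ o, max (b o) 0, fun y hy => ?_⟩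
    rw [le_inv_mul_iff₀ hδ]
    exact (hG_ge y).trans (Finset.sum_le_sum fun o _ => max_le_max_right 0 (hy o))

theorem mem_interior_setOf_forall_le [Finite ι] {β : ι → E →ₗ[ℝ] ℝ} {b : ι → ℝ} {x : E}
    (hx : ∀ o, β o x < b o) : x ∈ interior {y | ∀ o, β o y ≤ b o} := by
  have hopen : IsOpen {y | ∀ o, β o y < b o} := by
    simpa only [Set.ofPred_forall] using isOpen_iInter_of_finite fun o =>
      isOpen_lt (β o).continuous_of_finiteDimensional continuous_const
  exact interior_maximal (fun y hy o => (hy o).le) hopen hx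

theorem exists_affineMap_preimage_eq (ℓ : ι → E →ₗ[ℝ] ℝ) (b : ι → ℝ) {x₀ : E}
    (hx₀ : x₀ ∈ interior {x | ∀ i, ℓ i x ≤ b i}) :
    ∃ (α : ι ⊕ (Fin (Module.finrank ℝ E) ⊕ Fin (Module.finrank ℝ E)) → E →ₗ[ℝ] ℝ) (T : E →ᵃ[ℝ] E),
      (∀ u, (∀ k, α k u = 0) → u = 0) ∧ {x | ∀ i, ℓ i x ≤ b i} = T ⁻¹' {z | ∀ k, α k z ≤ 1} := by
  obtain ⟨ℓ', hℓ'⟩ := exists_forall_le_iff_le_one ℓ b hx₀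
  obtain ⟨π, g, hπ, hg, hker⟩ := exists_projection_kernel_eq_bot ℓ'
  refine ⟨Sum.elim ℓ' (Sum.elim g (-g)), π.toAffineMap + AffineMap.const ℝ E (-π x₀),
    fun u hu => hker u (fun i => hu (.inl i)) (fun k => hu (.inr (.inl k))), Set.ext fun x => ?_⟩
  have hπ' : ∀ i y, ℓ' i (π y) = ℓ' i y := fun i => LinearMap.congr_fun (hπ i)
  have hg' : ∀ k y, g k (π y) = 0 := fun k => LinearMap.congr_fun (hg k)
  simp [Sum.forall, hℓ' x, hπ', hg', ← sub_eq_add_neg, ← map_sub]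

end Geometry

section Projective

variable {V : Type*} [AddCommGroup V] [Module ℝ V] {ι : Type*}

/-- The image of `{z | ∀ k, α k z ≤ 1}` under `z ↦ (1 + c z)⁻¹ • z` is cut out by these. -/
def projConstraints (α : ι → V →ₗ[ℝ] ℝ) (c : V →ₗ[ℝ] ℝ) : Option ι → V →ₗ[ℝ] ℝ :=
  fun o => o.elim c fun k => α k + c

theorem exists_projective_compactification [Fintype ι] (α : ι → V →ₗ[ℝ] ℝ)
    (hα : ∀ u, (∀ k, α k u = 0) → u = 0) :
    ∃ c : V →ₗ[ℝ] ℝ, (∀ z, (∀ k, α k z ≤ 1) → -(1 / 2) ≤ c z) ∧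
      ∀ u, (∀ o, projConstraints α c o u ≤ 0) → u = 0 := by
  set n : ℝ := (Fintype.card ι : ℝ)
  -- `t` is small enough that `c ≥ -1/2` on `{z | ∀ k, α k z ≤ 1}` and `t * n < 1`.
  set t : ℝ := (2 * (n + 1))⁻¹
  have ht : 0 < t := by positivity
  have htn : t * n ≤ 1 / 2 := by
    have : t * (2 * (n + 1)) = 1 := inv_mul_cancel₀ (by positivity)
    linarith
  have hc : ∀ z, (-t • ∑ k, α k) z = -t * ∑ k, α k z := fun z => by simp
  refine ⟨-t • ∑ k, α k, fun z hz => ?_, fun u hu => ?_⟩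
  · have hsum : ∑ k, α k z ≤ ∑ _k : ι, 1 := Finset.sum_le_sum fun k _ => hz k
    rw [Finset.sum_const, Finset.card_univ, nsmul_one] at hsum
    nlinarith [hc z]
  · have hcu : -t * ∑ k, α k u ≤ 0 := hc u ▸ hu none
    have hαu : ∀ k, α k u + -t * ∑ k, α k u ≤ 0 := fun k => by
      simpa [projConstraints, hc] using hu (some k)
    have hsum : ∑ k, (α k u + -t * ∑ k, α k u) ≤ ∑ _k : ι, 0 := Finset.sum_le_sum fun k _ => hαu k
    rw [Finset.sum_add_distrib, Finset.sum_const, Finset.card_univ, nsmul_eq_mul,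
      Finset.sum_const_zero] at hsum
    have hs : ∑ k, α k u = 0 := by nlinarith
    have hzero := (Finset.sum_eq_zero_iff_of_nonpos fun k _ => by simpa [hs] using hαu k).mp hs
    exact hα u fun k => hzero k (Finset.mem_univ k)

theorem forall_le_one_iff_projConstraints {α : ι → V →ₗ[ℝ] ℝ} {c : V →ₗ[ℝ] ℝ}
    (hc : ∀ z, (∀ k, α k z ≤ 1) → -(1 / 2) ≤ c z) (z : V) :
    (∀ k, α k z ≤ 1) ↔ 1 / 2 ≤ 1 + c z ∧ ∀ o, projConstraints α c o ((1 + c z)⁻¹ • z) ≤ 1 := by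
  refine ⟨fun h => ⟨by linarith [hc z h], fun o => ?_⟩, fun ⟨hω, h⟩ k => ?_⟩
  · rw [map_smul, smul_eq_mul, inv_mul_le_iff₀ (by linarith [hc z h])]
    cases o with
    | none => simp [projConstraints]
    | some k => simpa [projConstraints] using h k
  · have hk := h (some k)
    rw [map_smul, smul_eq_mul, inv_mul_le_iff₀ (by linarith)] at hk
    simp only [projConstraints, Option.elim_some, LinearMap.add_apply] at hk
    linarith

end Projective

section Polyhedra

variable {d : ℕ} {ι : Type*}

theorem IsPolyhedron.exists_linearMap {P : Set (Fin d → ℝ)} (hP : IsPolyhedron P) :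
    ∃ (m : ℕ) (ℓ : Fin m → (Fin d → ℝ) →ₗ[ℝ] ℝ) (b : Fin m → ℝ), P = {x | ∀ i, ℓ i x ≤ b i} := by
  obtain ⟨m, a, b, rfl⟩ := hP
  exact ⟨m, fun i => LinearMap.proj i ∘ₗ Matrix.mulVecLin a, b, rfl⟩

theorem isPolyhedron_setOf_forall_le [Fintype ι] (ℓ : ι → (Fin d → ℝ) →ₗ[ℝ] ℝ) (b : ι → ℝ) :
    IsPolyhedron {x | ∀ k, ℓ k x ≤ b k} := by
  let e := Fintype.equivFin ι
  refine ⟨Fintype.card ι, fun i j => ℓ (e.symm i) (Pi.single j 1), fun i => b (e.symm i),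
    Set.ext fun x => ?_⟩
  simp only [Set.mem_ofPred_eq, ← LinearMap.apply_eq_sum_single_mul]
  exact e.symm.forall_congr_right.symm

theorem exists_polytope_hasPolyRep_add_one [Fintype ι] (α : ι → (Fin d → ℝ) →ₗ[ℝ] ℝ)
    (hα : ∀ u, (∀ k, α k u = 0) → u = 0) :
    ∃ Q, IsPolyhedron Q ∧ IsCompact Q ∧ (interior Q).Nonempty ∧
      HasPolyRep (mP d Q + 1) {z | ∀ k, α k z ≤ 1} := by
  obtain ⟨c, hc, hrec⟩ := exists_projective_compactification α hα
  obtain ⟨w, hw⟩ := exists_eval_eq_linearMap c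
  refine ⟨{y | ∀ o, projConstraints α c o y ≤ 1}, isPolyhedron_setOf_forall_le _ _,
    isCompact_setOf_forall_le _ hrec, ⟨0, mem_interior_setOf_forall_le fun o => by simp⟩, ?_⟩
  convert ((hasPolyRep_setOf_forall_le (projConstraints α c) fun _ => 1).hasPolyRep_mP).projective
    (1 + w) one_half_pos using 1
  ext z
  simpa [hw] using forall_le_one_iff_projConstraints hc z

theorem IsPolyhedron.exists_polytope_mP_le {P : Set (Fin d → ℝ)} (hP : IsPolyhedron P)
    (hint : (interior P).Nonempty) :
    ∃ Q, IsPolyhedron Q ∧ IsCompact Q ∧ (interior Q).Nonempty ∧ mP d P ≤ mP d Q + 1 := by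
  obtain ⟨m, ℓ, b, rfl⟩ := hP.exists_linearMap
  obtain ⟨x₀, hx₀⟩ := hint
  obtain ⟨α, T, hα, hT⟩ := exists_affineMap_preimage_eq ℓ b hx₀
  obtain ⟨Q, hQ, hQc, hQi, hK⟩ := exists_polytope_hasPolyRep_add_one α hα
  obtain ⟨G, hG⟩ := T.exists_eval_eq
  exact ⟨Q, hQ, hQc, hQi, hT ▸ (hK.preimage hG).mP_le⟩

end Polyhedra

theorem Nat.sSup_le_sSup_add {S T : Set ℕ} {k : ℕ} (hTS : T ⊆ S)
    (h : ∀ n ∈ S, ∃ m ∈ T, n ≤ m + k) : sSup S ≤ sSup T + k := by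
  by_cases hS : BddAbove S
  · refine csSup_le' fun n hn => ?_
    obtain ⟨m, hm, hnm⟩ := h n hn
    exact hnm.trans (Nat.add_le_add_right (le_csSup (hS.mono hTS) hm) k)
  · simp [csSup_of_not_bddAbove hS]

theorem mPmaxPolyhedron_le_general (d : ℕ) :
    mPmaxPolyhedron d ≤ mPmaxPolytope d + 1 := by
  refine Nat.sSup_le_sSup_add (fun n ⟨P, hP, _, hPi, hn⟩ => ⟨P, hP, hPi, hn⟩) ?_
  rintro _ ⟨P, hP, hPi, rfl⟩
  obtain ⟨Q, hQ, hQc, hQi, hPQ⟩ := hP.exists_polytope_mP_le hPi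
  exact ⟨mP d Q, ⟨Q, hQ, hQc, hQi, rfl⟩, hPQ⟩

/-- For `d ≥ 2`, `m̄_P(d) ≤ m_P(d) + 1`. -/
theorem mPmaxPolyhedron_le (d : ℕ) (hd : 2 ≤ d) :
    mPmaxPolyhedron d ≤ mPmaxPolytope d + 1 :=
  mPmaxPolyhedron_le_general d
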